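/- arXiv:1011.5284 — 2 statements merged into one kernel-verified Lean document; each statement's English description precedes it below -/
import Mathlib

section
/- Let W be a reflexive Banach space whose norm is locally uniformly convex, and H a C¹ functional on W satisfying ⟨H'(u) - H'(v), u - v⟩ ≥ (‖u‖^{p-1} - ‖v‖^{p-1})(‖u‖ - ‖v‖) for all u, v. If u_n ⇀ u weakly in W and ⟨H'(u_n), u_n - u⟩ → 0, then u_n → u strongly in W. -/
/-!
Testing the monotonicity inequality at `(u_n, u)` bounds
`(‖u_n‖^{p-1} - ‖u‖^{p-1})(‖u_n‖ - ‖u‖)` by `⟨H'(u_n), u_n - u⟩ - ⟨H'(u), u_n - u⟩`, which tends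
to `0` by the hypothesis and weak convergence; as `t ↦ t^{p-1}` is strictly increasing this forces
`‖u_n‖ → ‖u‖`. Then the normalised vectors `u_n / ‖u_n‖` and `u / ‖u‖` satisfy
`‖u_n / ‖u_n‖ + u / ‖u‖‖ → 2`, as seen by pairing with a norming functional of `u`, and local
uniform convexity makes them converge.
-/

open Filter

/-- A normed space is locally uniformly convex. -/
def IsLocallyUniformlyConvex (W : Type*) [NormedAddCommGroup W] : Prop :=
  ∀ x : W, ‖x‖ = 1 → ∀ ε > 0, ∃ δ > 0, ∀ y : W, ‖y‖ = 1 → 2 - δ < ‖x + y‖ → ‖x - y‖ < ε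

/-- A real normed space is reflexive: every element of the bidual is evaluation at a point. -/
def IsReflexiveSpace (W : Type*) [NormedAddCommGroup W] [NormedSpace ℝ W] : Prop :=
  ∀ Φ : (W →L[ℝ] ℝ) →L[ℝ] ℝ, ∃ x : W, ∀ f : W →L[ℝ] ℝ, Φ f = f x

open Topology

theorem StrictMonoOn.tendsto_of_mul_sub_le {ι : Type*} {l : Filter ι} {s : Set ℝ} [s.OrdConnected]
    {f : ℝ → ℝ} (hf : StrictMonoOn f s) {a d : ι → ℝ} {b : ℝ} (hb : b ∈ s)
    (has : ∀ᶠ n in l, a n ∈ s) (hle : ∀ᶠ n in l, (f (a n) - f b) * (a n - b) ≤ d n)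
    (hd : Tendsto d l (𝓝 0)) : Tendsto a l (𝓝 b) := by
  refine tendsto_order.2 ⟨fun c hcb => ?_, fun c hbc => ?_⟩
  · by_cases hc : c ∈ s
    · have hpos : 0 < (f b - f c) * (b - c) :=
        mul_pos (sub_pos.2 (hf hc hb hcb)) (sub_pos.2 hcb)
      filter_upwards [has, hle, hd.eventually (gt_mem_nhds hpos)] with n hn hlen hdn
      by_contra! hnc
      have hfc : f (a n) ≤ f c := hf.monotoneOn hn hc hnc
      have : (f b - f c) * (b - c) ≤ (f (a n) - f b) * (a n - b) :=
        calc (f b - f c) * (b - c) ≤ (f b - f (a n)) * (b - a n) :=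
              mul_le_mul (sub_le_sub_left hfc (f b)) (sub_le_sub_left hnc b) (sub_pos.2 hcb).le
                (sub_nonneg.2 (hfc.trans (hf.monotoneOn hc hb hcb.le)))
          _ = (f (a n) - f b) * (a n - b) := by ring
      linarith
    · filter_upwards [has] with n hn
      by_contra! hnc
      exact hc (Set.OrdConnected.out ‹_› hn hb ⟨hnc, hcb.le⟩)
  · by_cases hc : c ∈ s
    · have hpos : 0 < (f c - f b) * (c - b) :=
        mul_pos (sub_pos.2 (hf hb hc hbc)) (sub_pos.2 hbc)
      filter_upwards [has, hle, hd.eventually (gt_mem_nhds hpos)] with n hn hlen hdn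
      by_contra! hnc
      have hfc : f c ≤ f (a n) := hf.monotoneOn hc hn hnc
      have : (f c - f b) * (c - b) ≤ (f (a n) - f b) * (a n - b) :=
        mul_le_mul (sub_le_sub_right hfc (f b)) (sub_le_sub_right hnc b)
          (sub_pos.2 hbc).le (sub_nonneg.2 ((hf.monotoneOn hb hc hbc.le).trans hfc))
      linarith
    · filter_upwards [has] with n hn
      by_contra! hnc
      exact hc (Set.OrdConnected.out ‹_› hb hn ⟨hbc.le, hnc⟩)

section
variable {W : Type*} [NormedAddCommGroup W] {ι : Type*} {l : Filter ι}

theorem IsLocallyUniformlyConvex.tendsto_of_tendsto_norm_add (hluc : IsLocallyUniformlyConvex W)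
    {x : W} {y : ι → W} (hx : ‖x‖ = 1) (hy : ∀ᶠ n in l, ‖y n‖ = 1)
    (hadd : Tendsto (fun n => ‖x + y n‖) l (𝓝 2)) : Tendsto y l (𝓝 x) := by
  refine Metric.tendsto_nhds.2 fun ε hε => ?_
  obtain ⟨δ, hδ, hxδ⟩ := hluc x hx ε hε
  filter_upwards [hy, hadd.eventually (lt_mem_nhds (by linarith : 2 - δ < 2))] with n hyn hn
  rw [dist_eq_norm, norm_sub_rev]
  exact hxδ _ hyn hn

theorem IsLocallyUniformlyConvex.tendsto_of_weak_of_tendsto_norm [NormedSpace ℝ W]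
    (hluc : IsLocallyUniformlyConvex W) {x : W} {xn : ι → W}
    (hweak : ∀ f : W →L[ℝ] ℝ, Tendsto (fun n => f (xn n)) l (𝓝 (f x)))
    (hnorm : Tendsto (fun n => ‖xn n‖) l (𝓝 ‖x‖)) : Tendsto xn l (𝓝 x) := by
  rcases eq_or_ne x 0 with rfl | hx
  · exact tendsto_zero_iff_norm_tendsto_zero.2 (by simpa using hnorm)
  have hx' : 0 < ‖x‖ := norm_pos_iff.2 hx
  have hxn : ∀ᶠ n in l, xn n ≠ 0 :=
    (hnorm.eventually (lt_mem_nhds hx')).mono fun n hn => norm_pos_iff.1 hn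
  obtain ⟨f, hf, hfx⟩ := exists_dual_vector ℝ x hx'.ne'
  have hunit_norm {v : W} (hv : v ≠ 0) : ‖‖v‖⁻¹ • v‖ = 1 := norm_smul_inv_norm hv
  have hf2 : Tendsto (fun n => f (‖x‖⁻¹ • x + ‖xn n‖⁻¹ • xn n)) l (𝓝 2) := by
    have := (tendsto_const_nhds (x := ‖x‖⁻¹ * f x)).add ((hnorm.inv₀ hx'.ne').mul (hweak f))
    simp only [map_add, map_smul, smul_eq_mul]
    convert this using 2
    rw [hfx, RCLike.ofReal_real_eq_id, id, inv_mul_cancel₀ hx'.ne']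
    norm_num
  have hunit : Tendsto (fun n => ‖xn n‖⁻¹ • xn n) l (𝓝 (‖x‖⁻¹ • x)) := by
    refine hluc.tendsto_of_tendsto_norm_add (hunit_norm hx)
      (hxn.mono fun n hn => hunit_norm hn) ?_
    refine tendsto_of_tendsto_of_tendsto_of_le_of_le' hf2 tendsto_const_nhds ?_ ?_
    · exact .of_forall fun n =>
        (Real.le_norm_self _).trans ((f.le_of_opNorm_le hf.le _).trans_eq (one_mul _))
    · filter_upwards [hxn] with n hn
      calc _ ≤ ‖‖x‖⁻¹ • x‖ + ‖‖xn n‖⁻¹ • xn n‖ := norm_add_le _ _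
        _ = 2 := by rw [hunit_norm hx, hunit_norm hn]; norm_num
  refine (smul_inv_smul₀ hx'.ne' x ▸ hnorm.smul hunit).congr' ?_
  filter_upwards [hxn] with n hn
  exact smul_inv_smul₀ (norm_ne_zero_iff.2 hn) _
end

theorem stmt_5_general {W : Type*} [NormedAddCommGroup W] [NormedSpace ℝ W]
    (hluc : IsLocallyUniformlyConvex W)
    (p : ℝ) (hp : 1 < p)
    (H' : W → W →L[ℝ] ℝ)
    (hmono : ∀ u v : W,
      (‖u‖ ^ (p - 1) - ‖v‖ ^ (p - 1)) * (‖u‖ - ‖v‖) ≤ (H' u - H' v) (u - v))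
    (un : ℕ → W) (u : W)
    (hweak : ∀ f : W →L[ℝ] ℝ, Tendsto (fun n => f (un n)) atTop (nhds (f u)))
    (hpair : Tendsto (fun n => (H' (un n)) (un n - u)) atTop (nhds 0)) :
    Tendsto un atTop (nhds u) := by
  have hnorm : Tendsto (fun n => ‖un n‖) atTop (𝓝 ‖u‖) := by
    refine (Real.strictMonoOn_rpow_Ici_of_exponent_pos (sub_pos.2 hp)).tendsto_of_mul_sub_le
      (d := fun n => H' (un n) (un n - u) - H' u (un n - u)) (norm_nonneg u)
      (.of_forall fun n => norm_nonneg (un n)) (.of_forall fun n => ?_) ?_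
    · simpa using hmono (un n) u
    · simpa using hpair.sub ((hweak (H' u)).sub_const (H' u u))
  exact hluc.tendsto_of_weak_of_tendsto_norm hweak hnorm

/-- If `W` is a reflexive Banach space with locally uniformly convex norm, `H` is a `C¹`
functional with `⟨H'(u)-H'(v), u-v⟩ ≥ (‖u‖^{p-1}-‖v‖^{p-1})(‖u‖-‖v‖)`, `u_n ⇀ u` weakly and
`⟨H'(u_n), u_n - u⟩ → 0`, then `u_n → u` strongly. -/
theorem stmt_5 {W : Type*} [NormedAddCommGroup W] [NormedSpace ℝ W] [CompleteSpace W]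
    (hrefl : IsReflexiveSpace W) (hluc : IsLocallyUniformlyConvex W)
    (p : ℝ) (hp : 1 < p)
    (H : W → ℝ) (H' : W → W →L[ℝ] ℝ)
    (hH : ∀ u, HasFDerivAt H (H' u) u) (hH' : Continuous H')
    (hmono : ∀ u v : W,
      (‖u‖ ^ (p - 1) - ‖v‖ ^ (p - 1)) * (‖u‖ - ‖v‖) ≤ (H' u - H' v) (u - v))
    (un : ℕ → W) (u : W)
    (hweak : ∀ f : W →L[ℝ] ℝ, Tendsto (fun n => f (un n)) atTop (nhds (f u)))
    (hpair : Tendsto (fun n => (H' (un n)) (un n - u)) atTop (nhds 0)) :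
    Tendsto un atTop (nhds u) :=
  stmt_5_general hluc p hp H' hmono un u hweak hpair
end

section
/- Under conditions (B) and (V), with V⁺ nonzero on a positive measure set, the restriction of H(u) = (1/p)∫(|∇u|^p + b|u|^p)dx to the manifold M = {u : (1/p)∫V|u|^p dx = 1} satisfies the Palais–Smale condition: any sequence (u_n) ⊂ M with H(u_n) → c and (H|_M)'(u_n) → 0 has a subsequence converging in W to some u ∈ M. -/
/-!
Evaluating `H'(u_n) - μ_n I'(u_n) → 0` at `u_n` and using the homogeneity identities
`H'(u)u = pH(u)`, `I'(u)u = pI(u) = p` shows that the Lagrange multipliers converge, `μ_n → c`.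
Since `H(u_n) → c` bounds `(u_n)`, a subsequence converges weakly to some `w`, with `I(w) = 1`.
Writing `H'(u_n) = (H'(u_n) - μ_n I'(u_n)) + μ_n (I'(u_n) - I'(w)) + μ_n I'(w)` and evaluating at
`u_n - w`, every term tends to `0`, so the `(S⁺)` property upgrades weak to strong convergence.
-/

open Filter Topology

lemma exists_norm_le_of_tendsto_rpow_norm {E : Type*} [SeminormedAddCommGroup E] {p c : ℝ}
    (hp : 0 < p) {u : ℕ → E} (hu : Tendsto (fun n => ‖u n‖ ^ p) atTop (𝓝 c)) :
    ∃ C, ∀ n, ‖u n‖ ≤ C := by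
  obtain ⟨K, hK⟩ := hu.bddAbove_range
  refine ⟨K ^ p⁻¹, fun n => ?_⟩
  calc ‖u n‖ = (‖u n‖ ^ p) ^ p⁻¹ := (Real.rpow_rpow_inv (norm_nonneg _) hp.ne').symm
    _ ≤ K ^ p⁻¹ := Real.rpow_le_rpow (by positivity) (hK ⟨n, rfl⟩) (inv_nonneg.2 hp.le)

lemma ContinuousLinearMap.tendsto_apply_zero_of_bounded {E : Type*} [SeminormedAddCommGroup E]
    [NormedSpace ℝ E] {L : ℕ → E →L[ℝ] ℝ} {v : ℕ → E} {C : ℝ}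
    (hL : Tendsto (fun n => ‖L n‖) atTop (𝓝 0)) (hv : ∀ n, ‖v n‖ ≤ C) :
    Tendsto (fun n => L n (v n)) atTop (𝓝 0) := by
  refine squeeze_zero_norm (fun n => ?_) (by simpa using hL.mul_const C)
  exact (L n).le_opNorm_of_le (hv n)

section LagrangeMultiplier

variable {E : Type*} [SeminormedAddCommGroup E] [NormedSpace ℝ E]
  {A B : ℕ → E →L[ℝ] ℝ} {μ : ℕ → ℝ} {u : ℕ → E} {C : ℝ}

lemma tendsto_multiplier_of_tendsto_norm_sub_smul {p c : ℝ} {h : ℕ → ℝ} (hp : p ≠ 0)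
    (hA : ∀ n, A n (u n) = p * h n) (hB : ∀ n, B n (u n) = p)
    (hh : Tendsto h atTop (𝓝 c)) (hu : ∀ n, ‖u n‖ ≤ C)
    (hAB : Tendsto (fun n => ‖A n - μ n • B n‖) atTop (𝓝 0)) :
    Tendsto μ atTop (𝓝 c) := by
  have hμ : μ = fun n => h n - (A n - μ n • B n) (u n) / p := by
    funext n
    simp only [sub_apply, smul_apply, hA, hB, smul_eq_mul]
    field_simp
    ring
  rw [hμ]
  simpa using hh.sub ((ContinuousLinearMap.tendsto_apply_zero_of_bounded hAB hu).div_const p)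

lemma tendsto_apply_sub_of_tendsto_norm_sub_smul {c : ℝ} {B₀ : E →L[ℝ] ℝ} {w : E}
    (hμ : Tendsto μ atTop (𝓝 c)) (hu : ∀ n, ‖u n‖ ≤ C)
    (hAB : Tendsto (fun n => ‖A n - μ n • B n‖) atTop (𝓝 0))
    (hB : Tendsto (fun n => ‖B n - B₀‖) atTop (𝓝 0))
    (hweak : Tendsto (fun n => B₀ (u n)) atTop (𝓝 (B₀ w))) :
    Tendsto (fun n => A n (u n - w)) atTop (𝓝 0) := by
  have hbdd : ∀ n, ‖u n - w‖ ≤ C + ‖w‖ := fun n =>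
    (norm_sub_le _ _).trans (add_le_add (hu n) le_rfl)
  have hsplit : ∀ n, A n (u n - w) = (A n - μ n • B n) (u n - w)
      + μ n * ((B n - B₀) (u n - w)) + μ n * (B₀ (u n) - B₀ w) := by
    intro n
    simp only [sub_apply, smul_apply, smul_eq_mul, map_sub]
    ring
  have h := ((ContinuousLinearMap.tendsto_apply_zero_of_bounded hAB hbdd).add
    (hμ.mul (ContinuousLinearMap.tendsto_apply_zero_of_bounded hB hbdd))).add
    (hμ.mul (hweak.sub_const (B₀ w)))
  simp only [sub_self, mul_zero, add_zero] at h
  exact h.congr fun n => (hsplit n).symm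

end LagrangeMultiplier

theorem stmt_9_general {W : Type*} [NormedAddCommGroup W] [NormedSpace ℝ W]
    (p c : ℝ) (hp : 1 < p)
    (H I : W → ℝ) (H' I' : W → W →L[ℝ] ℝ)
    (hHnorm : ∀ u, H u = (1 / p) * ‖u‖ ^ p)
    (hHhom : ∀ u, H' u u = p * H u) (hIhom : ∀ u, I' u u = p * I u)
    (hrefl : ∀ v : ℕ → W, (∃ C, ∀ n, ‖v n‖ ≤ C) →
      ∃ (w : W) (φ : ℕ → ℕ), StrictMono φ ∧
        ∀ f : W →L[ℝ] ℝ, Tendsto (fun n => f (v (φ n))) atTop (nhds (f w)))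
    (hIw : ∀ (v : ℕ → W) (w : W),
      (∀ f : W →L[ℝ] ℝ, Tendsto (fun n => f (v n)) atTop (nhds (f w))) →
      Tendsto (fun n => I (v n)) atTop (nhds (I w)))
    (hI'w : ∀ (v : ℕ → W) (w : W),
      (∀ f : W →L[ℝ] ℝ, Tendsto (fun n => f (v n)) atTop (nhds (f w))) →
      Tendsto (fun n => ‖I' (v n) - I' w‖) atTop (nhds 0))
    (hS : ∀ (v : ℕ → W) (w : W),
      (∀ f : W →L[ℝ] ℝ, Tendsto (fun n => f (v n)) atTop (nhds (f w))) →
      Tendsto (fun n => (H' (v n)) (v n - w)) atTop (nhds 0) →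
      Tendsto v atTop (nhds w))
    (u : ℕ → W) (hM : ∀ n, I (u n) = 1)
    (hHc : Tendsto (fun n => H (u n)) atTop (nhds c))
    (μ : ℕ → ℝ)
    (hPS : Tendsto (fun n => ‖H' (u n) - μ n • I' (u n)‖) atTop (nhds 0)) :
    ∃ (w : W) (φ : ℕ → ℕ), StrictMono φ ∧ I w = 1 ∧
      Tendsto (fun n => u (φ n)) atTop (nhds w) := by
  have hp0 : 0 < p := one_pos.trans hp
  obtain ⟨C, hC⟩ := exists_norm_le_of_tendsto_rpow_norm hp0 (c := p * c) <| by
    simpa [hHnorm, hp0.ne'] using hHc.const_mul p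
  obtain ⟨w, φ, hφ, hweak⟩ := hrefl u ⟨C, hC⟩
  have hμ : Tendsto μ atTop (𝓝 c) :=
    tendsto_multiplier_of_tendsto_norm_sub_smul hp0.ne' (fun n => hHhom (u n))
      (fun n => by rw [hIhom, hM, mul_one]) hHc hC hPS
  have hφ' := hφ.tendsto_atTop
  refine ⟨w, φ, hφ, ?_, hS _ w hweak ?_⟩
  · simpa [hM, eq_comm] using hIw _ w hweak
  · exact tendsto_apply_sub_of_tendsto_norm_sub_smul (hμ.comp hφ') (fun n => hC (φ n))
      (hPS.comp hφ') (hI'w _ w hweak) (hweak (I' w))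

/-- The restriction of `H(u) = (1/p)‖u‖^p` to `M = {I = 1}` satisfies the Palais–Smale
condition: if `I(u_n) = 1`, `H(u_n) → c` and `(H|_M)'(u_n) = H'(u_n) - μ_n I'(u_n) → 0`
(Lagrange form), then a subsequence of `(u_n)` converges in `W` to some `u ∈ M`.
The structural facts used are: reflexivity of `W` (bounded sequences have weakly convergent
subsequences), weak continuity of `I`, weak-to-strong continuity of `I'`, the `(S⁺)`-type
property of `H'`, and the `p`-homogeneity pairings. -/
theorem stmt_9 {W : Type*} [NormedAddCommGroup W] [NormedSpace ℝ W]
    (p c : ℝ) (hp : 1 < p)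
    (H I : W → ℝ) (H' I' : W → W →L[ℝ] ℝ)
    (hH : ∀ u, HasFDerivAt H (H' u) u) (hI : ∀ u, HasFDerivAt I (I' u) u)
    (hHnorm : ∀ u, H u = (1 / p) * ‖u‖ ^ p)
    (hHhom : ∀ u, H' u u = p * H u) (hIhom : ∀ u, I' u u = p * I u)
    (hrefl : ∀ v : ℕ → W, (∃ C, ∀ n, ‖v n‖ ≤ C) →
      ∃ (w : W) (φ : ℕ → ℕ), StrictMono φ ∧
        ∀ f : W →L[ℝ] ℝ, Tendsto (fun n => f (v (φ n))) atTop (nhds (f w)))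
    (hIw : ∀ (v : ℕ → W) (w : W),
      (∀ f : W →L[ℝ] ℝ, Tendsto (fun n => f (v n)) atTop (nhds (f w))) →
      Tendsto (fun n => I (v n)) atTop (nhds (I w)))
    (hI'w : ∀ (v : ℕ → W) (w : W),
      (∀ f : W →L[ℝ] ℝ, Tendsto (fun n => f (v n)) atTop (nhds (f w))) →
      Tendsto (fun n => ‖I' (v n) - I' w‖) atTop (nhds 0))
    (hS : ∀ (v : ℕ → W) (w : W),
      (∀ f : W →L[ℝ] ℝ, Tendsto (fun n => f (v n)) atTop (nhds (f w))) →
      Tendsto (fun n => (H' (v n)) (v n - w)) atTop (nhds 0) →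
      Tendsto v atTop (nhds w))
    (u : ℕ → W) (hM : ∀ n, I (u n) = 1)
    (hHc : Tendsto (fun n => H (u n)) atTop (nhds c))
    (μ : ℕ → ℝ)
    (hPS : Tendsto (fun n => ‖H' (u n) - μ n • I' (u n)‖) atTop (nhds 0)) :
    ∃ (w : W) (φ : ℕ → ℕ), StrictMono φ ∧ I w = 1 ∧
      Tendsto (fun n => u (φ n)) atTop (nhds w) :=
  stmt_9_general p c hp H I H' I' hHnorm hHhom hIhom hrefl hIw hI'w hS u hM hHc μ hPS
end
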